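/- arXiv:1206.3766 — 2 statements merged into one kernel-verified Lean document; each statement's English description precedes it below -/
import Mathlib

section
/- Let k ≥ 2 be a natural number, p ∈ (0, π/4), δ ∈ (0, p/4], η > 0, and ε ∈ (0, min(p/10, 1/10)]. Suppose φ : [0, π] → ℝ is smooth with |φ(r) − sin r| < ε and |φ′(r) − cos r| < ε for all r ∈ [0, π], and φ″(r) ≤ η for all r ∈ [p − δ, p + δ]. Suppose ν : [0, π] → ℝ is smooth and satisfies ν″(r) + ν′(r)² < −2η/(k·p) and ν′(r) < −2√2·η/k for all r ∈ [p − δ, p + δ]. Then for all r ∈ [p − δ, p + δ]: ν″(r) + ν′(r)² < −φ″(r)/(k·φ(r)) and ν′(r)·φ′(r) < −φ″(r)/k. -/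
open Real Set

set_option maxHeartbeats 1000000 in
/-- Verification step in the proof of Lemma 1: on `[p - δ, p + δ]`, the explicit
differential inequalities imposed on `ν` imply the two inequalities making the
horizontal Ricci curvature of the warped product positive there. -/
theorem verification_step (k : ℕ) (hk : 2 ≤ k) (p : ℝ) (hp : p ∈ Ioo 0 (π / 4))
    (δ : ℝ) (hδ : δ ∈ Ioc 0 (p / 4)) (η : ℝ) (hη : 0 < η)
    (ε : ℝ) (hε : ε ∈ Ioc 0 (min (p / 10) (1 / 10)))
    (φ : ℝ → ℝ) (hφ : ContDiff ℝ (⊤ : ℕ∞) φ)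
    (hφ1 : ∀ r ∈ Icc (0 : ℝ) π, |φ r - Real.sin r| < ε ∧ |deriv φ r - Real.cos r| < ε)
    (hφ2 : ∀ r ∈ Icc (p - δ) (p + δ), deriv (deriv φ) r ≤ η)
    (ν : ℝ → ℝ) (hν : ContDiff ℝ (⊤ : ℕ∞) ν)
    (hν1 : ∀ r ∈ Icc (p - δ) (p + δ),
      deriv (deriv ν) r + (deriv ν r) ^ 2 < -2 * η / (k * p) ∧
      deriv ν r < -2 * Real.sqrt 2 * η / k) :
    ∀ r ∈ Icc (p - δ) (p + δ),
      deriv (deriv ν) r + (deriv ν r) ^ 2 < -(deriv (deriv φ) r) / (k * φ r) ∧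
      deriv ν r * deriv φ r < -(deriv (deriv φ) r) / k := by
  intro r hr
  obtain ⟨hr1, hr2⟩ := hr
  obtain ⟨hp0, hp4⟩ := hp
  obtain ⟨hδ0, hδp⟩ := hδ
  have hπlt : π < 3.15 := Real.pi_lt_d2
  have hπgt : (3.14 : ℝ) < π := by linarith [Real.pi_gt_d6]
  have hK : (2 : ℝ) ≤ (k : ℝ) := by exact_mod_cast hk
  have hK0 : (0 : ℝ) < (k : ℝ) := by linarith
  have hε0 : 0 < ε := hε.1
  have hεp : ε ≤ p / 10 := le_trans hε.2 (min_le_left _ _)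
  have hε10 : ε ≤ 1 / 10 := le_trans hε.2 (min_le_right _ _)
  have hr0 : 0 < r := by linarith
  have hr1' : r ≤ 1 := by linarith
  have hrI : r ∈ Icc (0 : ℝ) π := ⟨hr0.le, by linarith⟩
  obtain ⟨hφv, hφd⟩ := hφ1 r hrI
  rw [abs_lt] at hφv hφd
  obtain ⟨hν1a, hν1b⟩ := hν1 r ⟨hr1, hr2⟩
  have hφ'' : deriv (deriv φ) r ≤ η := hφ2 r ⟨hr1, hr2⟩
  -- sin r > 0.6 p, hence φ r > p/2
  have hsin : r - r ^ 3 / 4 < Real.sin r := by linarith [Real.sin_gt_sub_cube hr0, pow_pos hr0 3]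
  have hsin2 : 0.6 * p < Real.sin r := by
    nlinarith [mul_nonneg (sub_nonneg.2 (show 3 * p / 4 ≤ r by linarith))
      (show (0:ℝ) ≤ 4 - (r ^ 2 + r * (3 * p / 4) + (3 * p / 4) ^ 2) by nlinarith),
      sq_nonneg p, mul_pos hp0 hp0]
  have hφpos : p / 2 < φ r := by linarith
  have hφpos0 : 0 < φ r := by linarith
  -- cos r > 0.5, hence deriv φ r > 0.4 > √2/4
  have hcos : 1 - r ^ 2 / 2 ≤ Real.cos r := Real.one_sub_sq_div_two_le_cos
  have hφ' : 0.4 < deriv φ r := by nlinarith [mul_le_one₀ hr1' hr0.le hr1']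
  have hs2 : Real.sqrt 2 ^ 2 = 2 := Real.sq_sqrt (by norm_num)
  have hs0 : 0 < Real.sqrt 2 := Real.sqrt_pos.2 (by norm_num)
  have hs15 : Real.sqrt 2 < 1.5 := by nlinarith
  have hφ's : Real.sqrt 2 / 4 < deriv φ r := by linarith
  constructor
  · rw [lt_div_iff₀ (by positivity)]
    rw [show -2 * η / (↑k * p) = (-2 * η) / (↑k * p) by ring, lt_div_iff₀ (by positivity)] at hν1a
    set X := deriv (deriv ν) r + (deriv ν r) ^ 2 with hX
    have hXneg : X < 0 := by nlinarith [mul_pos hK0 hp0]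
    nlinarith [mul_pos (show 0 < -X * (k : ℝ) from mul_pos (by linarith) hK0) (show 0 < φ r - p / 2 by linarith)]
  · rw [lt_div_iff₀ hK0]
    rw [show -2 * Real.sqrt 2 * η / (k : ℝ) = (-2 * Real.sqrt 2 * η) / (k : ℝ) by ring,
      lt_div_iff₀ hK0] at hν1b
    have hνneg : deriv ν r < 0 := by nlinarith [mul_pos (mul_pos hs0 hη) hK0]
    nlinarith [mul_pos (show 0 < -(deriv ν r) * (k : ℝ) from mul_pos (by linarith) hK0)
      (show 0 < deriv φ r - Real.sqrt 2 / 4 by linarith),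
      mul_lt_mul_of_pos_right hν1b (show 0 < Real.sqrt 2 / 4 by positivity)]
end

section
/- Let k ≥ 2 be a natural number, p ∈ (0, π/4), δ ∈ (0, p/4], η ∈ (0, sin(p)/300], and ε ∈ (0, sin(p)/5]. Suppose φ, ν : [0, π] → ℝ are smooth and satisfy: φ(r) = sin r for all r ∈ [0, π] \ ((p − δ, p + δ) ∪ (π/3, 2π/3)); φ(r) > 0 for all r ∈ (0, π); |φ(r) − sin r| < ε and |φ′(r) − cos r| < ε for all r ∈ [0, π]; |φ″(r) + sin r| < ε for all r ∈ (π/3, 2π/3); ν is constant on [0, p − 2δ] and constant on [3π/4, π]; and |ν′(r)| ≤ 20η/k and |ν″(r)| ≤ 20η/k for all r ∈ [0, π] \ (p − 2δ, p + δ). Then for every r ∈ (0, π) \ (p − 2δ, p + δ): −φ″(r)/φ(r) − k(ν″(r) + ν′(r)²) ≥ 1/2 and −φ″(r)/φ(r) − k·ν′(r)·φ′(r)/φ(r) ≥ 1/2. -/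
open Real Set

set_option maxHeartbeats 1000000

private lemma deriv_eqOn_Icc {f g : ℝ → ℝ} (hf : Differentiable ℝ f) (hg : Differentiable ℝ g)
    {a b : ℝ} (hab : a < b) (h : ∀ x ∈ Icc a b, f x = g x) :
    ∀ r ∈ Icc a b, deriv f r = deriv g r := by
  intro r hr
  have hu : UniqueDiffWithinAt ℝ (Icc a b) r := uniqueDiffOn_Icc hab r hr
  have h1 : HasDerivWithinAt f (deriv f r) (Icc a b) r := (hf r).hasDerivAt.hasDerivWithinAt
  have h2 : HasDerivWithinAt f (deriv g r) (Icc a b) r :=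
    ((hg r).hasDerivAt.hasDerivWithinAt).congr h (h r hr)
  rw [← h1.derivWithin hu, ← h2.derivWithin hu]

private lemma derivs_eq_sin {φ : ℝ → ℝ} (hφ : ContDiff ℝ (⊤ : ℕ∞) φ) {a b : ℝ} (hab : a < b)
    (h : ∀ x ∈ Icc a b, φ x = Real.sin x) :
    ∀ r ∈ Icc a b, deriv φ r = Real.cos r ∧ deriv (deriv φ) r = -Real.sin r := by
  have hd1 : Differentiable ℝ φ := hφ.differentiable (by simp)
  have hdd := (contDiff_infty_iff_deriv.mp (hφ.of_le (le_rfl : ((⊤:ℕ∞):WithTop ℕ∞) ≤ ((⊤:ℕ∞):WithTop ℕ∞)))).2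
  have h1 : ∀ r ∈ Icc a b, deriv φ r = Real.cos r := by
    intro r hr
    rw [deriv_eqOn_Icc hd1 Real.differentiable_sin hab h r hr, Real.deriv_sin]
  have h2 : ∀ r ∈ Icc a b, deriv (deriv φ) r = -Real.sin r := by
    intro r hr
    rw [deriv_eqOn_Icc (hdd.differentiable (by simp)) Real.differentiable_cos
      hab h1 r hr, Real.deriv_cos']
  exact fun r hr => ⟨h1 r hr, h2 r hr⟩

private lemma derivs_eq_const {ν : ℝ → ℝ} (hν : ContDiff ℝ (⊤ : ℕ∞) ν) {a b c : ℝ} (hab : a < b)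
    (h : ∀ x ∈ Icc a b, ν x = c) :
    ∀ r ∈ Icc a b, deriv ν r = 0 ∧ deriv (deriv ν) r = 0 := by
  have hd1 : Differentiable ℝ ν := hν.differentiable (by simp)
  have hdd := (contDiff_infty_iff_deriv.mp (hν.of_le (le_rfl : ((⊤:ℕ∞):WithTop ℕ∞) ≤ ((⊤:ℕ∞):WithTop ℕ∞)))).2
  have h1 : ∀ r ∈ Icc a b, deriv ν r = 0 := by
    intro r hr
    rw [deriv_eqOn_Icc hd1 (differentiable_const c) hab h r hr, deriv_const]
  have h2 : ∀ r ∈ Icc a b, deriv (deriv ν) r = 0 := by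
    intro r hr
    rw [deriv_eqOn_Icc (hdd.differentiable (by simp)) (differentiable_const 0)
      hab h1 r hr, deriv_const]
  exact fun r hr => ⟨h1 r hr, h2 r hr⟩

private lemma sin_lower {a r : ℝ} (ha0 : 0 ≤ a) (ha : a ≤ π/2) (h1 : a ≤ r) (h2 : r ≤ π - a) :
    Real.sin a ≤ Real.sin r := by
  rcases le_total r (π/2) with h | h
  · exact Real.sin_le_sin_of_le_of_le_pi_div_two (by linarith [Real.pi_pos]) h h1
  · rw [← Real.sin_pi_sub r]
    exact Real.sin_le_sin_of_le_of_le_pi_div_two (by linarith [Real.pi_pos]) (by linarith)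
      (by linarith)

private lemma case_triv {K r : ℝ} (hsr : 0 < Real.sin r) :
    -(-Real.sin r)/Real.sin r - K*(0 + 0^2) ≥ 1/2 ∧
    -(-Real.sin r)/Real.sin r - K*0*Real.cos r/Real.sin r ≥ 1/2 := by
  rw [neg_neg, div_self hsr.ne']
  constructor <;> norm_num

private lemma case_exact {K S η r ν' ν'' : ℝ} (hK : 2 ≤ K) (hS : 0 < S) (hS1 : S ≤ 1)
    (hη : 0 < η) (hη' : η ≤ S/300) (hsin : S ≤ Real.sin r)
    (hν' : |ν'| ≤ 20*η/K) (hν'' : |ν''| ≤ 20*η/K) :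
    -(-Real.sin r)/Real.sin r - K*(ν'' + ν'^2) ≥ 1/2 ∧
    -(-Real.sin r)/Real.sin r - K*ν'*Real.cos r/Real.sin r ≥ 1/2 := by
  have hsr : 0 < Real.sin r := lt_of_lt_of_le hS hsin
  have h1 : -(-Real.sin r)/Real.sin r = 1 := by rw [neg_neg, div_self hsr.ne']
  have hK0 : (0:ℝ) < K := by linarith
  have hb := abs_le.mp hν'
  have hc := abs_le.mp hν''
  have hsq : ν'^2 ≤ (20*η/K)^2 := sq_le_sq' hb.1 hb.2
  have hKA : K*(20*η/K) = 20*η := by field_simp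
  have hA10 : 20*η/K ≤ 10*η := by rw [div_le_iff₀ hK0]; nlinarith
  have hA0 : 0 ≤ 20*η/K := by positivity
  have hKn : K*|ν'| ≤ 20*η := by
    have := mul_le_mul_of_nonneg_left hν' hK0.le
    rwa [hKA] at this
  have hKnn : K*ν'' ≤ 20*η := by
    have := mul_le_mul_of_nonneg_left hc.2 hK0.le
    rwa [hKA] at this
  have hKsq : K*ν'^2 ≤ 20*η*(10*η) := by
    calc K*ν'^2 ≤ K*(20*η/K)^2 := mul_le_mul_of_nonneg_left hsq hK0.le
      _ = (K*(20*η/K))*(20*η/K) := by ring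
      _ = 20*η*(20*η/K) := by rw [hKA]
      _ ≤ 20*η*(10*η) := mul_le_mul_of_nonneg_left hA10 (by positivity)
  have hη1 : η ≤ 1/300 := by linarith
  have hsq200 : 200*η^2 ≤ (200/300)*η := by
    nlinarith [mul_le_mul_of_nonneg_left hη1 (show (0:ℝ) ≤ 200*η by positivity)]
  constructor
  · rw [h1]
    have h2 : K*(ν'' + ν'^2) ≤ 20*η + 200*η^2 := by nlinarith
    linarith
  · rw [h1]
    have hcos := Real.abs_cos_le_one r
    have h3 : K * |ν'| * |Real.cos r| ≤ 20*η := by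
      calc K * |ν'| * |Real.cos r| ≤ K * |ν'| * 1 :=
            mul_le_mul_of_nonneg_left hcos (mul_nonneg hK0.le (abs_nonneg ν'))
        _ = K * |ν'| := by ring
        _ ≤ 20*η := hKn
    have habs : |K*ν'*Real.cos r/Real.sin r| ≤ 20*η/S := by
      rw [abs_div, abs_of_pos hsr, abs_mul, abs_mul, abs_of_pos hK0]
      exact div_le_div₀ (by positivity) h3 hS hsin
    have h4 : 20*η/S ≤ 1/15 := by rw [div_le_iff₀ hS]; nlinarith
    have h5 := (abs_le.mp habs).2
    linarith

private lemma case_mid {K S η ε r f f' f'' ν' ν'' : ℝ} (hK : 2 ≤ K) (hS : 0 < S)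
    (hS2 : S ≤ Real.sqrt 2/2)
    (hη : 0 < η) (hη' : η ≤ S/300) (hε : 0 < ε) (hε' : ε ≤ S/5)
    (hr1 : π/3 < r) (hr2 : r < 2*π/3)
    (hf : |f - Real.sin r| < ε) (hf' : |f' - Real.cos r| < ε) (hf'' : |f'' + Real.sin r| < ε)
    (hν' : |ν'| ≤ 20*η/K) (hν'' : |ν''| ≤ 20*η/K) :
    -f''/f - K*(ν'' + ν'^2) ≥ 1/2 ∧ -f''/f - K*ν'*f'/f ≥ 1/2 := by
  have hK0 : (0:ℝ) < K := by linarith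
  have hpi := Real.pi_gt_d6
  have hpi' := Real.pi_lt_d2
  have s2 : Real.sqrt 2 < 1.42 := by
    nlinarith [Real.sq_sqrt (show (0:ℝ) ≤ 2 by norm_num), Real.sqrt_nonneg 2]
  have s3 : (1.73:ℝ) < Real.sqrt 3 := by
    nlinarith [Real.sq_sqrt (show (0:ℝ) ≤ 3 by norm_num), Real.sqrt_nonneg 3]
  have s3' : Real.sqrt 3 < 1.74 := by
    nlinarith [Real.sq_sqrt (show (0:ℝ) ≤ 3 by norm_num), Real.sqrt_nonneg 3]
  have hSle : S ≤ 0.71 := by linarith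
  have hsin : Real.sqrt 3 / 2 ≤ Real.sin r := by
    rw [← Real.sin_pi_div_three]
    exact sin_lower (by positivity) (by linarith) (by linarith) (by linarith)
  have hsin1 := Real.sin_le_one r
  have hcos : |Real.cos r| ≤ 1/2 := by
    rw [abs_le]
    refine ⟨?_, ?_⟩
    · have h := Real.cos_le_cos_of_nonneg_of_le_pi (show (0:ℝ) ≤ r by linarith)
        (show 2*π/3 ≤ π by linarith) (le_of_lt hr2)
      have hv : Real.cos (2*π/3) = -(1/2) := by
        rw [show 2*π/3 = π - π/3 by ring, Real.cos_pi_sub, Real.cos_pi_div_three]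
      linarith
    · have h := Real.cos_le_cos_of_nonneg_of_le_pi (show (0:ℝ) ≤ π/3 by positivity)
        (show r ≤ π by linarith) (le_of_lt hr1)
      rw [Real.cos_pi_div_three] at h
      exact h
  have hfb := abs_lt.mp hf
  have hfb' := abs_lt.mp hf'
  have hfb'' := abs_lt.mp hf''
  have hcb := abs_le.mp hcos
  have hεle : ε ≤ 0.142 := by linarith
  have hfl : Real.sqrt 3/2 - ε ≤ f := by linarith
  have hfpos : 0 < f := by linarith
  have hfu : f ≤ 1 + ε := by linarith
  have hml : Real.sqrt 3/2 - ε ≤ -f'' := by linarith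
  have hml0 : (0:ℝ) ≤ Real.sqrt 3/2 - ε := by linarith
  have hfl7 : (0.7:ℝ) ≤ f := by linarith
  have hterm : (3:ℝ)/5 ≤ -f''/f := by
    have h1 : (Real.sqrt 3/2 - ε)/(1 + ε) ≤ -f''/f :=
      div_le_div₀ (hml0.trans hml) hml hfpos hfu
    have h2 : (3:ℝ)/5 ≤ (Real.sqrt 3/2 - ε)/(1 + ε) := by
      rw [le_div_iff₀ (by linarith : (0:ℝ) < 1 + ε)]
      linarith
    linarith
  have hb := abs_le.mp hν'
  have hc := abs_le.mp hν''
  have hsq : ν'^2 ≤ (20*η/K)^2 := sq_le_sq' hb.1 hb.2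
  have hKA : K*(20*η/K) = 20*η := by field_simp
  have hA10 : 20*η/K ≤ 10*η := by rw [div_le_iff₀ hK0]; nlinarith
  have hA0 : 0 ≤ 20*η/K := by positivity
  have hKn : K*|ν'| ≤ 20*η := by
    have := mul_le_mul_of_nonneg_left hν' hK0.le
    rwa [hKA] at this
  have hKnn : K*ν'' ≤ 20*η := by
    have := mul_le_mul_of_nonneg_left hc.2 hK0.le
    rwa [hKA] at this
  have hKsq : K*ν'^2 ≤ 20*η*(10*η) := by
    calc K*ν'^2 ≤ K*(20*η/K)^2 := mul_le_mul_of_nonneg_left hsq hK0.le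
      _ = (K*(20*η/K))*(20*η/K) := by ring
      _ = 20*η*(20*η/K) := by rw [hKA]
      _ ≤ 20*η*(10*η) := mul_le_mul_of_nonneg_left hA10 (by positivity)
  have hη1 : η ≤ 0.71/300 := by linarith
  have hsq200 : 200*η^2 ≤ (200*0.71/300)*η := by
    nlinarith [mul_le_mul_of_nonneg_left hη1 (show (0:ℝ) ≤ 200*η by positivity)]
  constructor
  · have h2 : K*(ν'' + ν'^2) ≤ 20*η + 200*η^2 := by nlinarith
    have h3 : 20*η + 200*η^2 ≤ 1/10 := by linarith
    linarith
  · have hf'abs : |f'| ≤ 1/2 + ε := by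
      have := abs_sub_abs_le_abs_sub f' (Real.cos r)
      linarith [le_of_lt hf']
    have hn : |K*ν'*f'| ≤ 20*η*(1/2+ε) := by
      rw [abs_mul, abs_mul, abs_of_pos hK0]
      exact mul_le_mul hKn hf'abs (abs_nonneg f') (by positivity)
    have habs : |K*ν'*f'/f| ≤ 1/10 := by
      rw [abs_div, abs_of_pos hfpos]
      have h3 : |K*ν'*f'|/f ≤ (20*η*(1/2+ε))/(0.7:ℝ) :=
        div_le_div₀ (by positivity) hn (by norm_num) hfl7
      have e1 : 20*η ≤ 0.71/15 := by linarith
      have e2 : 1/2 + ε ≤ 0.642 := by linarith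
      have h4 : 20*η*(1/2+ε) ≤ (0.71/15)*0.642 :=
        mul_le_mul e1 e2 (by linarith) (by norm_num)
      have h5 : ((0.71:ℝ)/15)*0.642/(0.7:ℝ) ≤ 1/10 := by norm_num
      have h6 : (20*η*(1/2+ε))/(0.7:ℝ) ≤ ((0.71:ℝ)/15)*0.642/(0.7:ℝ) := by gcongr
      linarith
    linarith [(abs_le.mp habs).2]

/-- Proposition 2 ('still pos') of the paper: away from the interval `(p - 2δ, p + δ)`,
both diagonal coefficients of the horizontal Ricci curvature of the warped product
`S²_φ ×_ν F` are at least `1/2`. -/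
theorem still_pos (k : ℕ) (hk : 2 ≤ k) (p : ℝ) (hp : p ∈ Ioo 0 (π / 4))
    (δ : ℝ) (hδ : δ ∈ Ioc 0 (p / 4)) (η : ℝ) (hη : η ∈ Ioc 0 (Real.sin p / 300))
    (ε : ℝ) (hε : ε ∈ Ioc 0 (Real.sin p / 5))
    (φ ν : ℝ → ℝ) (hφ : ContDiff ℝ (⊤ : ℕ∞) φ) (hν : ContDiff ℝ (⊤ : ℕ∞) ν)
    (hφsin : ∀ r ∈ Icc (0 : ℝ) π \ (Ioo (p - δ) (p + δ) ∪ Ioo (π / 3) (2 * π / 3)),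
      φ r = Real.sin r)
    (hφpos : ∀ r ∈ Ioo (0 : ℝ) π, 0 < φ r)
    (hφC1 : ∀ r ∈ Icc (0 : ℝ) π, |φ r - Real.sin r| < ε ∧ |deriv φ r - Real.cos r| < ε)
    (hφC2 : ∀ r ∈ Ioo (π / 3) (2 * π / 3), |deriv (deriv φ) r + Real.sin r| < ε)
    (hνc0 : ∃ c : ℝ, ∀ r ∈ Icc (0 : ℝ) (p - 2 * δ), ν r = c)
    (hνcπ : ∃ c : ℝ, ∀ r ∈ Icc (3 * π / 4) π, ν r = c)
    (hνsmall : ∀ r ∈ Icc (0 : ℝ) π \ Ioo (p - 2 * δ) (p + δ),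
      |deriv ν r| ≤ 20 * η / k ∧ |deriv (deriv ν) r| ≤ 20 * η / k) :
    ∀ r ∈ Ioo (0 : ℝ) π \ Ioo (p - 2 * δ) (p + δ),
      -(deriv (deriv φ) r) / φ r - k * (deriv (deriv ν) r + (deriv ν r) ^ 2) ≥ 1 / 2 ∧
      -(deriv (deriv φ) r) / φ r - k * deriv ν r * deriv φ r / φ r ≥ 1 / 2 := by
  obtain ⟨hp1, hp2⟩ := hp
  obtain ⟨hδ1, hδ2⟩ := hδ
  obtain ⟨hη1, hη2⟩ := hη
  obtain ⟨hε1, hε2⟩ := hε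
  have hpi := Real.pi_gt_d6
  have hpi' := Real.pi_lt_d2
  have hK : (2:ℝ) ≤ (k:ℝ) := by exact_mod_cast hk
  have hS : 0 < Real.sin p := Real.sin_pos_of_pos_of_lt_pi hp1 (by linarith)
  have hS1 : Real.sin p ≤ 1 := Real.sin_le_one p
  have hS2 : Real.sin p ≤ Real.sqrt 2 / 2 := by
    rw [← Real.sin_pi_div_four]
    exact Real.sin_le_sin_of_le_of_le_pi_div_two (by linarith) (by linarith) (le_of_lt hp2)
  intro r hr
  obtain ⟨⟨hr1, hr2⟩, hrno⟩ := hr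
  have hsplit : r ≤ p - 2*δ ∨ p + δ ≤ r := by
    rcases le_or_gt r (p - 2*δ) with h | h
    · exact Or.inl h
    · right
      by_contra h2
      push_neg at h2
      exact hrno ⟨by linarith, by linarith⟩
  have hsr : 0 < Real.sin r := Real.sin_pos_of_pos_of_lt_pi hr1 hr2
  rcases hsplit with hA | hB
  · -- r ≤ p - 2δ : φ = sin, ν constant
    have hgood : ∀ x ∈ Icc (0:ℝ) (p - δ), φ x = Real.sin x := by
      intro x hx
      apply hφsin
      refine ⟨⟨hx.1, by linarith [hx.2]⟩, ?_⟩
      intro hmem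
      simp only [mem_union, mem_Ioo] at hmem
      rcases hmem with ⟨h1, h2⟩ | ⟨h1, h2⟩ <;> linarith [hx.2]
    have hrm : r ∈ Icc (0:ℝ) (p - δ) := ⟨hr1.le, by linarith⟩
    have hφr : φ r = Real.sin r := hgood r hrm
    obtain ⟨hφ'r, hφ''r⟩ := derivs_eq_sin hφ (show (0:ℝ) < p - δ by linarith) hgood r hrm
    obtain ⟨c, hc⟩ := hνc0
    obtain ⟨hν'r, hν''r⟩ := derivs_eq_const hν (show (0:ℝ) < p - 2*δ by linarith) hc r
      ⟨hr1.le, hA⟩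
    rw [hφr, hφ'r, hφ''r, hν'r, hν''r]
    exact case_triv hsr
  · -- p + δ ≤ r
    have hν2 := hνsmall r ⟨⟨hr1.le, hr2.le⟩, hrno⟩
    rcases le_or_gt r (π/3) with hB1 | hB1
    · -- p + δ ≤ r ≤ π/3 : φ = sin
      have hgood : ∀ x ∈ Icc (p + δ) (π/3), φ x = Real.sin x := by
        intro x hx
        apply hφsin
        refine ⟨⟨by linarith [hx.1], by linarith [hx.2]⟩, ?_⟩
        intro hmem
        simp only [mem_union, mem_Ioo] at hmem
        rcases hmem with ⟨h1, h2⟩ | ⟨h1, h2⟩ <;> linarith [hx.1, hx.2]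
      have hrm : r ∈ Icc (p + δ) (π/3) := ⟨hB, hB1⟩
      have hφr : φ r = Real.sin r := hgood r hrm
      obtain ⟨hφ'r, hφ''r⟩ := derivs_eq_sin hφ (show p + δ < π/3 by linarith) hgood r hrm
      have hsp : Real.sin p ≤ Real.sin r :=
        sin_lower hp1.le (by linarith) (by linarith) (by linarith)
      rw [hφr, hφ'r, hφ''r]
      exact case_exact hK hS hS1 hη1 hη2 hsp hν2.1 hν2.2
    · rcases lt_or_ge r (2*π/3) with hB2 | hB2
      · -- π/3 < r < 2π/3
        have hC1 := hφC1 r ⟨hr1.le, hr2.le⟩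
        have hC2 := hφC2 r ⟨hB1, hB2⟩
        exact case_mid hK hS hS2 hη1 hη2 hε1 hε2 hB1 hB2 hC1.1 hC1.2 hC2 hν2.1 hν2.2
      · -- 2π/3 ≤ r
        have hgood : ∀ x ∈ Icc (2*π/3) π, φ x = Real.sin x := by
          intro x hx
          apply hφsin
          refine ⟨⟨by linarith [hx.1], hx.2⟩, ?_⟩
          intro hmem
          simp only [mem_union, mem_Ioo] at hmem
          rcases hmem with ⟨h1, h2⟩ | ⟨h1, h2⟩ <;> linarith [hx.1]
        have hrm : r ∈ Icc (2*π/3) π := ⟨hB2, hr2.le⟩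
        have hφr : φ r = Real.sin r := hgood r hrm
        obtain ⟨hφ'r, hφ''r⟩ := derivs_eq_sin hφ (show 2*π/3 < π by linarith) hgood r hrm
        rcases le_or_gt (3*π/4) r with hE | hD
        · -- ν constant near π
          obtain ⟨c, hc⟩ := hνcπ
          obtain ⟨hν'r, hν''r⟩ := derivs_eq_const hν (show 3*π/4 < π by linarith) hc r
            ⟨hE, hr2.le⟩
          rw [hφr, hφ'r, hφ''r, hν'r, hν''r]
          exact case_triv hsr
        · -- 2π/3 ≤ r < 3π/4
          have hsp : Real.sin p ≤ Real.sin r :=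
            sin_lower hp1.le (by linarith) (by linarith) (by linarith)
          rw [hφr, hφ'r, hφ''r]
          exact case_exact hK hS hS1 hη1 hη2 hsp hν2.1 hν2.2
end
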